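/- With the same construction as before (graph H built from H₀ on m ≥ 3 vertices with pendant paths of length m at x₁ and x₂ and a path of length m − 2 between x₁ and x₂): if H₀ has no Hamiltonian path at all, then λ(H) = 3m − 2, and every path of length 3m − 2 in H has endpoints v and w. -/

import Mathlib

/-- The set of lengths (numbers of edges) of simple paths in `G`. -/
def pathLengths {V : Type*} (G : SimpleGraph V) : Set ℕ :=
  {n | ∃ (a b : V) (p : G.Walk a b), p.IsPath ∧ p.length = n}

/-- `p` is a longest path of `G`: a path whose length is maximal among all paths of `G`. -/
def IsLongestPath {V : Type*} (G : SimpleGraph V) {a b : V} (p : G.Walk a b) : Prop :=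
  p.IsPath ∧ ∀ n ∈ pathLengths G, n ≤ p.length

/-- `v` is a Gallai vertex of `G`: it lies on every longest path. -/
def GallaiVertex {V : Type*} (G : SimpleGraph V) (v : V) : Prop :=
  ∀ (a b : V) (p : G.Walk a b), IsLongestPath G p → v ∈ p.support

/-- Relation generating the graph obtained from `H` by attaching a pendant path of
length `k` at the vertex `x` (the pendant vertices are `Sum.inr 0, …, Sum.inr (k-1)`). -/
def pendantRel {V : Type*} (H : SimpleGraph V) (x : V) (k : ℕ) :
    V ⊕ Fin k → V ⊕ Fin k → Prop
  | Sum.inl a, Sum.inl b => H.Adj a b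
  | Sum.inl a, Sum.inr i => a = x ∧ i.val = 0
  | Sum.inr i, Sum.inr j => i.val + 1 = j.val
  | _, _ => False

/-- The graph obtained from `H` by attaching a pendant path of length `k` at `x`. -/
def pendantGraph {V : Type*} (H : SimpleGraph V) (x : V) (k : ℕ) :
    SimpleGraph (V ⊕ Fin k) :=
  SimpleGraph.fromRel (pendantRel H x k)

/-- Relation generating the gadget graph `H` from `H₀`: a pendant path of length `m` at
`x₁` (vertices `Sum.inr (Sum.inl i)`, tip `v` at `i = m - 1`), a pendant path of length
`m` at `x₂` (vertices `Sum.inr (Sum.inr (Sum.inl i))`, tip `w` at `i = m - 1`), and an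
internally disjoint path of length `m - 2` between `x₁` and `x₂` with `m - 3` new
internal vertices `Sum.inr (Sum.inr (Sum.inr i))` (a direct edge `x₁x₂` when `m = 3`). -/
def gadgetRel {V : Type*} (H0 : SimpleGraph V) (x1 x2 : V) (m : ℕ) :
    V ⊕ (Fin m ⊕ Fin m ⊕ Fin (m - 3)) → V ⊕ (Fin m ⊕ Fin m ⊕ Fin (m - 3)) → Prop
  | Sum.inl a, Sum.inl b => H0.Adj a b ∨ (m = 3 ∧ a = x1 ∧ b = x2)
  | Sum.inl a, Sum.inr (Sum.inl i) => a = x1 ∧ i.val = 0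
  | Sum.inl a, Sum.inr (Sum.inr (Sum.inl i)) => a = x2 ∧ i.val = 0
  | Sum.inl a, Sum.inr (Sum.inr (Sum.inr i)) =>
      (a = x1 ∧ i.val = 0) ∨ (a = x2 ∧ i.val = m - 4)
  | Sum.inr (Sum.inl i), Sum.inr (Sum.inl j) => i.val + 1 = j.val
  | Sum.inr (Sum.inr (Sum.inl i)), Sum.inr (Sum.inr (Sum.inl j)) => i.val + 1 = j.val
  | Sum.inr (Sum.inr (Sum.inr i)), Sum.inr (Sum.inr (Sum.inr j)) => i.val + 1 = j.val
  | _, _ => False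

/-- The gadget graph `H` built from `H₀`, `x₁`, `x₂` and `m`. -/
def gadgetGraph {V : Type*} (H0 : SimpleGraph V) (x1 x2 : V) (m : ℕ) :
    SimpleGraph (V ⊕ (Fin m ⊕ Fin m ⊕ Fin (m - 3))) :=
  SimpleGraph.fromRel (gadgetRel H0 x1 x2 m)

/-!
The path `v … x₁ … x₂ … w` through the connector has `3m - 2` edges. Conversely, removing `x₁`
and `x₂` from `H` leaves four pieces: `H₀ - {x₁, x₂}` with `m - 2` vertices, the two pendant
paths with `m` vertices each, and the interior of the connecting path with `m - 3` vertices.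
A path of `H` passes `x₁` and `x₂` at most once each, so it consists of at most three stretches,
each inside a single piece. When it passes both, the stretch between them has at most `m - 3`
vertices: it cannot lie in a pendant path, which meets only one of `x₁, x₂`; in the connector
this is counting; in `H₀` it holds because together with `x₁` and `x₂` the stretch is a path of
`H₀`, which is not Hamiltonian. Hence a path has at most `m + 1 + (m - 3) + 1 + m = 3m - 1`
vertices, and in the case of equality the two outer stretches are entire pendant paths, so the
path contains `v` and `w`. Having degree one, `v` and `w` can only be its ends.

Paths are handled through their vertex lists, which are duplicate-free chains of adjacent
vertices.
-/

namespace List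

variable {α : Type*}

theorem Nodup.length_le_card_of_forall_mem [DecidableEq α] {l : List α} {s : Finset α}
    (hl : l.Nodup) (h : ∀ a ∈ l, a ∈ s) : l.length ≤ s.card := by
  rw [← toFinset_card_of_nodup hl]
  exact Finset.card_le_card fun a ha => h a (mem_toFinset.1 ha)

theorem Nodup.mem_of_card_le_length [DecidableEq α] {l : List α} {s : Finset α}
    (hl : l.Nodup) (h : ∀ a ∈ l, a ∈ s) (hlen : s.card ≤ l.length) {a : α} (ha : a ∈ s) :
    a ∈ l := by
  rw [← toFinset_card_of_nodup hl] at hlen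
  have := Finset.eq_of_subset_of_card_le (fun a ha => h a (mem_toFinset.1 ha)) hlen
  exact mem_toFinset.1 (this ▸ ha)

theorem IsChain.imp_of_inner {R S : α → α → Prop} {p : α → Prop}
    (hRS : ∀ x y, R x y → p x ∨ p y → S x y) {a b : α} {l : List α} (hl : l ≠ [])
    (hp : ∀ x ∈ l, p x) (h : IsChain R (a :: (l ++ [b]))) : IsChain S (a :: (l ++ [b])) := by
  induction l generalizing a with
  | nil => exact absurd rfl hl
  | cons c l ih =>
    rw [cons_append, isChain_cons_cons] at h ⊢
    refine ⟨hRS _ _ h.1 (.inr (hp c mem_cons_self)), ?_⟩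
    rcases l with _ | ⟨d, l⟩
    · exact isChain_pair.2 (hRS _ _ (isChain_pair.1 h.2) (.inl (hp c mem_cons_self)))
    · exact ih (cons_ne_nil _ _) (fun x hx => hp x (mem_cons_of_mem _ hx)) h.2

end List

namespace SimpleGraph

variable {V : Type*} {G : SimpleGraph V}

theorem length_lt_card_of_isChain_of_not_hamiltonian [Fintype V]
    (hG : ¬ ∃ (a b : V) (p : G.Walk a b), p.IsPath ∧ ∀ u : V, u ∈ p.support)
    {l : List V} (hne : l ≠ []) (hc : l.IsChain G.Adj) (hnd : l.Nodup) :
    l.length < Fintype.card V := by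
  classical
  refine lt_of_le_of_ne hnd.length_le_card fun hlen => hG ⟨_, _, .ofSupport l hne hc, ?_, ?_⟩
  · rw [Walk.isPath_def, Walk.support_ofSupport]; exact hnd
  · intro u
    rw [Walk.support_ofSupport]
    exact hnd.mem_of_card_le_length (s := Finset.univ) (by simp) (by simp [hlen])
      (Finset.mem_univ u)

theorem Walk.IsPath.eq_or_eq_of_adj_unique {a b y : V} {p : G.Walk a b} (hp : p.IsPath)
    (hy : y ∈ p.support) (huniq : ∀ u z, G.Adj y u → G.Adj y z → u = z) : y = a ∨ y = b := by
  obtain ⟨n, rfl, hn⟩ := Walk.mem_support_iff_exists_getVert.1 hy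
  rcases Nat.eq_zero_or_pos n with rfl | hpos
  · exact .inl p.getVert_zero
  rcases eq_or_lt_of_le hn with rfl | hlt
  · exact .inr p.getVert_length
  have hprev := p.adj_getVert_succ (i := n - 1) (by omega)
  rw [Nat.sub_add_cancel hpos] at hprev
  have := hp.getVert_injOn (by rw [Set.mem_ofPred_eq]; omega) (by rw [Set.mem_ofPred_eq]; omega)
    (huniq _ _ hprev.symm (p.adj_getVert_succ hlt))
  omega

theorem isChain_adj_reverse {l : List V} : l.reverse.IsChain G.Adj ↔ l.IsChain G.Adj := by
  rw [List.isChain_reverse]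
  exact List.IsChain.iff fun _ _ => G.adj_comm _ _

end SimpleGraph

namespace Gadget

open SimpleGraph Finset

variable {V : Type*} {H0 : SimpleGraph V} {x1 x2 : V} {m : ℕ}

abbrev Vert (V : Type*) (m : ℕ) := V ⊕ (Fin m ⊕ Fin m ⊕ Fin (m - 3))

abbrev pend₁ (i : Fin m) : Vert V m := .inr (.inl i)
abbrev pend₂ (i : Fin m) : Vert V m := .inr (.inr (.inl i))
abbrev conn (i : Fin (m - 3)) : Vert V m := .inr (.inr (.inr i))

/-- The components of `H - {x₁, x₂}`; `piece` puts `x₁` and `x₂` themselves into `core`. -/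
inductive Piece
  | core
  | pendant₁
  | pendant₂
  | connector

def piece : Vert V m → Piece
  | .inl _ => .core
  | .inr (.inl _) => .pendant₁
  | .inr (.inr (.inl _)) => .pendant₂
  | .inr (.inr (.inr _)) => .connector

def ports (x1 x2 : V) (m : ℕ) : Set (Vert V m) := {.inl x1, .inl x2}

local notation "G" => gadgetGraph H0 x1 x2 m

theorem piece_eq_of_adj {y z : Vert V m} (h : (G).Adj y z) (hy : y ∉ ports x1 x2 m)
    (hz : z ∉ ports x1 x2 m) : piece y = piece z := by
  simp only [ports, Set.mem_insert_iff, Set.mem_singleton_iff] at hy hz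
  rcases y with a | i | i | i <;> rcases z with b | j | j | j <;>
    simp_all [gadgetGraph, gadgetRel, piece]

theorem adj_unique_of_tip (hm : 3 ≤ m) {y u z : Vert V m}
    (hy : y = pend₁ ⟨m - 1, by omega⟩ ∨ y = pend₂ ⟨m - 1, by omega⟩)
    (hu : (G).Adj y u) (hz : (G).Adj y z) : u = z := by
  rcases hy with rfl | rfl <;> rcases u with a | i | i | i <;> rcases z with b | j | j | j <;>
    simp [gadgetGraph, gadgetRel, Fin.ext_iff] at hu hz ⊢ <;> omega

def longPathVertex (x1 x2 : V) (m : ℕ) (i : Fin (3 * m - 1)) : Vert V m :=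
  if h₁ : i.val < m then pend₁ ⟨m - 1 - i, by omega⟩
  else if h₂ : i.val = m then .inl x1
  else if h₃ : i.val < 2 * m - 2 then conn ⟨i - m - 1, by omega⟩
  else if h₄ : i.val = 2 * m - 2 then .inl x2
  else pend₂ ⟨i - (2 * m - 1), by omega⟩

theorem isChain_longPath (hx : x1 ≠ x2) (hm : 3 ≤ m) :
    (List.ofFn (longPathVertex x1 x2 m)).IsChain (G).Adj := by
  rw [List.isChain_ofFn]
  intro i hi
  dsimp only [longPathVertex, Fin.val_mk]
  split_ifs <;> simp [gadgetGraph, gadgetRel, Fin.ext_iff, hx, hx.symm] <;> omega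

theorem nodup_longPath (hx : x1 ≠ x2) : (List.ofFn (longPathVertex x1 x2 m)).Nodup := by
  rw [List.nodup_ofFn]
  intro i j h
  unfold longPathVertex at h
  split_ifs at h <;> simp [Fin.ext_iff, hx, hx.symm] at h ⊢ <;> omega

theorem three_mul_sub_two_mem_pathLengths (hx : x1 ≠ x2) (hm : 3 ≤ m) :
    3 * m - 2 ∈ pathLengths (G) :=
  ⟨_, _, .ofSupport _ (List.ofFn_eq_nil_iff.not.2 (by omega)) (isChain_longPath hx hm),
    by rw [Walk.isPath_def, Walk.support_ofSupport]; exact nodup_longPath hx,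
    by rw [Walk.length_ofSupport, List.length_ofFn]; omega⟩

theorem forall_not_mem_ports_iff {l : List (Vert V m)} :
    (∀ y ∈ l, y ∉ ports x1 x2 m) ↔ .inl x1 ∉ l ∧ .inl x2 ∉ l := by
  simp only [ports, Set.mem_insert_iff, Set.mem_singleton_iff, not_or, forall_and,
    List.forall_mem_ne']

theorem piece_eq_of_isChain {l : List (Vert V m)} (hc : l.IsChain (G).Adj)
    (hS : ∀ y ∈ l, y ∉ ports x1 x2 m) {y z : Vert V m} (hy : y ∈ l) (hz : z ∈ l) :
    piece y = piece z := by
  have hne : l ≠ [] := List.ne_nil_of_mem hy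
  have hpiece : ∀ u ∈ l, piece u = piece (l.head hne) :=
    (hc.imp_of_mem_imp fun a b ha hb hab => piece_eq_of_adj hab (hS a ha) (hS b hb)).induction
      _ l (fun _ _ hab ha => hab ▸ ha) fun _ => rfl
  rw [hpiece y hy, hpiece z hz]

def pieceFinset [Fintype V] [DecidableEq V] (x1 x2 : V) (m : ℕ) : Piece → Finset (Vert V m)
  | .core => ((univ.erase x1).erase x2).map .inl
  | .pendant₁ => univ.map (.trans .inl .inr)
  | .pendant₂ => univ.map (.trans (.trans .inl .inr) .inr)
  | .connector => univ.map (.trans (.trans .inr .inr) .inr)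

section pieceFinset

variable [Fintype V] [DecidableEq V]

theorem mem_pieceFinset {y : Vert V m} (hy : y ∉ ports x1 x2 m) :
    y ∈ pieceFinset x1 x2 m (piece y) := by
  simp only [ports, Set.mem_insert_iff, Set.mem_singleton_iff] at hy
  rcases y with a | i | i | i <;> simp_all [pieceFinset, piece]

@[simp] theorem card_pieceFinset_core (hx : x1 ≠ x2) :
    #(pieceFinset x1 x2 m .core) = Fintype.card V - 2 := by
  simp [pieceFinset, card_erase_of_mem, hx.symm]
  omega

@[simp] theorem card_pieceFinset_pendant₁ : #(pieceFinset x1 x2 m .pendant₁) = m := by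
  simp [pieceFinset]

@[simp] theorem card_pieceFinset_pendant₂ : #(pieceFinset x1 x2 m .pendant₂) = m := by
  simp [pieceFinset]

@[simp] theorem card_pieceFinset_connector : #(pieceFinset x1 x2 m .connector) = m - 3 := by
  simp [pieceFinset]

theorem card_pieceFinset_le (hx : x1 ≠ x2) (hcard : m = Fintype.card V)
    (k : Piece) : #(pieceFinset x1 x2 m k) ≤ m := by
  cases k <;> simp only [card_pieceFinset_core hx, card_pieceFinset_pendant₁,
    card_pieceFinset_pendant₂, card_pieceFinset_connector] <;> omega

theorem forall_mem_pieceFinset_of_isChain {l : List (Vert V m)} (hc : l.IsChain (G).Adj)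
    (hS : ∀ y ∈ l, y ∉ ports x1 x2 m) {z : Vert V m} (hz : z ∈ l) :
    ∀ y ∈ l, y ∈ pieceFinset x1 x2 m (piece z) := fun y hy =>
  piece_eq_of_isChain hc hS hy hz ▸ mem_pieceFinset (hS y hy)

end pieceFinset

variable [Fintype V]

theorem length_le_of_isChain (hx : x1 ≠ x2) (hcard : m = Fintype.card V)
    {l : List (Vert V m)} (hc : l.IsChain (G).Adj) (hnd : l.Nodup)
    (hS : ∀ y ∈ l, y ∉ ports x1 x2 m) : l.length ≤ m := by
  classical
  rcases l with _ | ⟨y, l⟩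
  · simp
  exact (hnd.length_le_card_of_forall_mem
    (forall_mem_pieceFinset_of_isChain hc hS List.mem_cons_self)).trans
    (card_pieceFinset_le hx hcard _)

theorem tip_mem_of_isChain_cons (hx : x1 ≠ x2) (hm : 3 ≤ m) (hcard : m = Fintype.card V)
    {x : V} {l : List (Vert V m)} (hc : (.inl x :: l).IsChain (G).Adj) (hnd : l.Nodup)
    (hS : ∀ y ∈ l, y ∉ ports x1 x2 m) (hlen : m ≤ l.length) :
    x = x1 ∧ pend₁ ⟨m - 1, by omega⟩ ∈ l ∨ x = x2 ∧ pend₂ ⟨m - 1, by omega⟩ ∈ l := by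
  classical
  rcases l with _ | ⟨y, l⟩
  · rw [List.length_nil] at hlen; omega
  have hxy := (List.isChain_cons_cons.1 hc).1
  have hall := forall_mem_pieceFinset_of_isChain hc.tail hS List.mem_cons_self
  have hbound := hnd.length_le_card_of_forall_mem hall
  rcases y with a | i | i | i <;> simp only [piece, List.length_cons, card_pieceFinset_core hx,
    card_pieceFinset_pendant₁, card_pieceFinset_pendant₂, card_pieceFinset_connector] at hlen hbound
  · omega
  · simp only [gadgetGraph, fromRel_adj, gadgetRel] at hxy
    refine .inl ⟨by tauto, hnd.mem_of_card_le_length hall (card_pieceFinset_pendant₁.trans_le hlen)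
      (by simp [piece, pieceFinset])⟩
  · simp only [gadgetGraph, fromRel_adj, gadgetRel] at hxy
    refine .inr ⟨by tauto, hnd.mem_of_card_le_length hall (card_pieceFinset_pendant₂.trans_le hlen)
      (by simp [piece, pieceFinset])⟩
  · omega

theorem length_add_two_lt_of_isChain_core
    (hnoham : ¬ ∃ (a b : V) (p : H0.Walk a b), p.IsPath ∧ ∀ u : V, u ∈ p.support)
    (hx : x1 ≠ x2) {l : List V} (hne : l ≠ [])
    (hc : (.inl x1 :: (l.map .inl ++ [.inl x2]) : List (Vert V m)).IsChain (G).Adj)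
    (hnd : l.Nodup) (hl : ∀ a ∈ l, a ≠ x1 ∧ a ≠ x2) : l.length + 2 < Fintype.card V := by
  have hc0 : (x1 :: (l ++ [x2])).IsChain H0.Adj := by
    refine List.IsChain.imp_of_inner (R := fun a b => (G).Adj (.inl a) (.inl b))
      (p := fun a => a ≠ x1 ∧ a ≠ x2) ?_ hne hl ?_
    · intro a b hab hp
      simp only [gadgetGraph, fromRel_adj, gadgetRel] at hab
      rcases hab with ⟨-, (h | ⟨-, rfl, rfl⟩) | (h | ⟨-, rfl, rfl⟩)⟩
      · exact h
      · tauto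
      · exact h.symm
      · tauto
    · exact (List.isChain_map Sum.inl).1 (by simpa using hc)
  have hnd0 : (x1 :: (l ++ [x2])).Nodup := by
    have h1 : x1 ∉ l := fun h => (hl x1 h).1 rfl
    have h2 : x2 ∉ l := fun h => (hl x2 h).2 rfl
    grind [List.nodup_append]
  simpa using length_lt_card_of_isChain_of_not_hamiltonian hnoham (List.cons_ne_nil _ _) hc0 hnd0

theorem length_le_of_isChain_between
    (hnoham : ¬ ∃ (a b : V) (p : H0.Walk a b), p.IsPath ∧ ∀ u : V, u ∈ p.support)
    (hx : x1 ≠ x2) (hcard : m = Fintype.card V) {l : List (Vert V m)}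
    (hc : (.inl x1 :: (l ++ [.inl x2])).IsChain (G).Adj) (hnd : l.Nodup)
    (hS : ∀ y ∈ l, y ∉ ports x1 x2 m) : l.length ≤ m - 3 := by
  classical
  rcases l with _ | ⟨y, l⟩
  · simp
  have hfirst := (List.isChain_cons_cons.1 hc).1
  have hc' := hc.of_cons
  have hall := forall_mem_pieceFinset_of_isChain hc'.left_of_append hS List.mem_cons_self
  have hlast := hc'.rel_getLast_head_of_append (List.cons_ne_nil y l) (List.cons_ne_nil _ [])
  have hlast_mem := hall _ (List.getLast_mem (List.cons_ne_nil y l))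
  rcases y with a | i | i | i
  · obtain ⟨l0, hl0⟩ : .inl a :: l ∈ Set.range (List.map Sum.inl) := by
      rw [Set.range_list_map]
      intro u hu
      obtain ⟨b, -, rfl⟩ := Finset.mem_map.1 (hall u hu)
      exact ⟨b, rfl⟩
    have h12 : ∀ b ∈ l0, b ≠ x1 ∧ b ≠ x2 := fun b hb => by
      have := hS (.inl b) (hl0 ▸ List.mem_map_of_mem hb)
      simp_all [ports]
    have := length_add_two_lt_of_isChain_core hnoham hx (l := l0) (by rintro rfl; simp at hl0)
      (by rw [hl0]; exact hc)
      (List.Nodup.of_map _ (hl0 ▸ hnd)) h12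
    have hlen := congrArg List.length hl0
    simp only [List.length_map] at hlen
    omega
  · obtain ⟨j, -, hj⟩ := Finset.mem_map.1 hlast_mem
    rw [← hj] at hlast
    simp [gadgetGraph, gadgetRel, hx.symm] at hlast
  · simp [gadgetGraph, gadgetRel, hx] at hfirst
  · simpa [piece, hcard] using hnd.length_le_card_of_forall_mem hall

theorem length_le_of_isChain_append_cons (hx : x1 ≠ x2) (hcard : m = Fintype.card V)
    {s t : List (Vert V m)} {y : Vert V m} (hc : (s ++ y :: t).IsChain (G).Adj)
    (hnd : (s ++ y :: t).Nodup) (h1 : .inl x1 ∉ s ++ t) (h2 : .inl x2 ∉ s ++ t) :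
    (s ++ y :: t).length ≤ 2 * m + 1 := by
  rw [List.mem_append, not_or] at h1 h2
  have hs := length_le_of_isChain hx hcard hc.left_of_append (hnd.sublist (by simp))
    (forall_not_mem_ports_iff.2 ⟨h1.1, h2.1⟩)
  have ht := length_le_of_isChain hx hcard hc.right_of_append.of_cons (hnd.sublist (by simp))
    (forall_not_mem_ports_iff.2 ⟨h1.2, h2.2⟩)
  simp only [List.length_append, List.length_cons]
  omega

theorem length_le_of_isChain_through_both
    (hnoham : ¬ ∃ (a b : V) (p : H0.Walk a b), p.IsPath ∧ ∀ u : V, u ∈ p.support)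
    (hx : x1 ≠ x2) (hm : 3 ≤ m) (hcard : m = Fintype.card V) {s t u : List (Vert V m)}
    (hc : (s ++ .inl x1 :: (t ++ .inl x2 :: u)).IsChain (G).Adj)
    (hnd : (s ++ .inl x1 :: (t ++ .inl x2 :: u)).Nodup) :
    (s ++ .inl x1 :: (t ++ .inl x2 :: u)).length ≤ 3 * m - 1 ∧
      ((s ++ .inl x1 :: (t ++ .inl x2 :: u)).length = 3 * m - 1 →
        pend₁ ⟨m - 1, by omega⟩ ∈ s ∧ pend₂ ⟨m - 1, by omega⟩ ∈ u) := by
  rw [List.isChain_split, List.isChain_cons_split] at hc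
  obtain ⟨hcs, hct, hcu⟩ := hc
  rw [← isChain_adj_reverse, List.reverse_append, List.reverse_singleton,
    List.singleton_append] at hcs
  have hS : (∀ y ∈ s, y ∉ ports x1 x2 m) ∧ (∀ y ∈ t, y ∉ ports x1 x2 m) ∧
      (∀ y ∈ u, y ∉ ports x1 x2 m) := by
    simp only [forall_not_mem_ports_iff]
    grind [List.nodup_append]
  have hnds : s.reverse.Nodup ∧ t.Nodup ∧ u.Nodup := by
    grind [List.nodup_append, List.nodup_reverse]
  have hS' : ∀ y ∈ s.reverse, y ∉ ports x1 x2 m := fun y hy => hS.1 y (List.mem_reverse.1 hy)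
  have hs := length_le_of_isChain hx hcard hcs.of_cons hnds.1 hS'
  have ht := length_le_of_isChain_between hnoham hx hcard hct hnds.2.1 hS.2.1
  have hu := length_le_of_isChain hx hcard hcu.of_cons hnds.2.2 hS.2.2
  rw [List.length_reverse] at hs
  simp only [List.length_append, List.length_cons]
  refine ⟨by omega, fun hlen => ⟨?_, ?_⟩⟩
  · have := tip_mem_of_isChain_cons hx hm hcard hcs hnds.1 hS' (by rw [List.length_reverse]; omega)
    simpa [hx] using this
  · have := tip_mem_of_isChain_cons hx hm hcard hcu hnds.2.2 hS.2.2 (by omega)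
    simpa [hx.symm] using this

theorem length_le_of_isChain_of_nodup
    (hnoham : ¬ ∃ (a b : V) (p : H0.Walk a b), p.IsPath ∧ ∀ u : V, u ∈ p.support)
    (hx : x1 ≠ x2) (hm : 3 ≤ m) (hcard : m = Fintype.card V) {L : List (Vert V m)}
    (hc : L.IsChain (G).Adj) (hnd : L.Nodup) :
    L.length ≤ 3 * m - 1 ∧
      (L.length = 3 * m - 1 → pend₁ ⟨m - 1, by omega⟩ ∈ L ∧ pend₂ ⟨m - 1, by omega⟩ ∈ L) := by
  by_cases h1 : .inl x1 ∈ L <;> by_cases h2 : .inl x2 ∈ L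
  · obtain ⟨s, t, rfl⟩ := List.append_of_mem h1
    rcases List.mem_append.1 h2 with h2 | h2
    · obtain ⟨s1, s2, rfl⟩ := List.append_of_mem h2
      have hrev : (s1 ++ .inl x2 :: s2 ++ .inl x1 :: t).reverse =
          t.reverse ++ .inl x1 :: (s2.reverse ++ .inl x2 :: s1.reverse) := by simp
      have := length_le_of_isChain_through_both hnoham hx hm hcard
        (hrev ▸ isChain_adj_reverse.2 hc) (hrev ▸ List.nodup_reverse.2 hnd)
      rw [← hrev, List.length_reverse] at this
      refine ⟨this.1, fun h => ?_⟩
      simp [List.mem_reverse.1 (this.2 h).1, List.mem_reverse.1 (this.2 h).2]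
    · obtain ⟨t1, u, rfl⟩ := List.append_of_mem (List.mem_of_ne_of_mem (by simpa using hx.symm) h2)
      have := length_le_of_isChain_through_both hnoham hx hm hcard hc hnd
      exact ⟨this.1, fun h => by simp [this.2 h]⟩
  · obtain ⟨s, t, rfl⟩ := List.append_of_mem h1
    have := length_le_of_isChain_append_cons hx hcard hc hnd
      (List.nodup_cons.1 (List.nodup_middle.1 hnd)).1 (by grind)
    omega
  · obtain ⟨s, t, rfl⟩ := List.append_of_mem h2
    have := length_le_of_isChain_append_cons hx hcard hc hnd
      (by grind) (List.nodup_cons.1 (List.nodup_middle.1 hnd)).1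
    omega
  · have := length_le_of_isChain hx hcard hc hnd (forall_not_mem_ports_iff.2 ⟨h1, h2⟩)
    omega

end Gadget

open SimpleGraph Gadget in
/-- If `H₀` (on `m = |V(H₀)| ≥ 3` vertices) has no Hamiltonian path at all, then the
gadget graph has longest path length `3m − 2`, and every path of length `3m − 2` has
endpoints `v` and `w` (the two pendant tips). -/
theorem stmt_12 {V : Type} [Fintype V] (H0 : SimpleGraph V) (x1 x2 : V)
    (hx : x1 ≠ x2) (m : ℕ) (hm : 3 ≤ m) (hcard : m = Fintype.card V)
    (hnoham : ¬ ∃ (a b : V) (p : H0.Walk a b), p.IsPath ∧ ∀ u : V, u ∈ p.support) :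
    IsGreatest (pathLengths (gadgetGraph H0 x1 x2 m)) (3 * m - 2) ∧
    ∀ (a b : V ⊕ (Fin m ⊕ Fin m ⊕ Fin (m - 3)))
      (p : (gadgetGraph H0 x1 x2 m).Walk a b), p.IsPath → p.length = 3 * m - 2 →
      ({a, b} : Set (V ⊕ (Fin m ⊕ Fin m ⊕ Fin (m - 3)))) =
        {Sum.inr (Sum.inl (⟨m - 1, by omega⟩ : Fin m)),
         Sum.inr (Sum.inr (Sum.inl (⟨m - 1, by omega⟩ : Fin m)))} := by
  have hbound {a b} (p : (gadgetGraph H0 x1 x2 m).Walk a b) (hp : p.IsPath) :=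
    length_le_of_isChain_of_nodup hnoham hx hm hcard p.isChain_adj_support hp.support_nodup
  refine ⟨⟨three_mul_sub_two_mem_pathLengths hx hm, ?_⟩, ?_⟩
  · rintro n ⟨a, b, p, hp, rfl⟩
    have := (hbound p hp).1
    rw [Walk.length_support] at this
    omega
  · intro a b p hp hlen
    obtain ⟨hv, hw⟩ := (hbound p hp).2 (by rw [Walk.length_support]; omega)
    have hva := hp.eq_or_eq_of_adj_unique hv fun _ _ => adj_unique_of_tip hm (.inl rfl)
    have hwa := hp.eq_or_eq_of_adj_unique hw fun _ _ => adj_unique_of_tip hm (.inr rfl)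
    rcases hva with rfl | rfl <;> rcases hwa with h | h
    · simp at h
    · rw [← h]
    · rw [← h, Set.pair_comm]
    · simp at h
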